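/- The cubic polynomial 9x³ − 9x² − 44x − 52 has a real root r with |r − π| < 2×10^{-7}. -/
import Mathlib

open Real

/-- The cubic `9x³ - 9x² - 44x - 52` has a real root within `2·10⁻⁷` of `π`. -/
theorem cubic_root_near_pi_1 :
    ∃ r : ℝ, 9 * r ^ 3 - 9 * r ^ 2 - 44 * r - 52 = 0 ∧
      |r - π| < 2 / 10 ^ 7 := by
  have hc : ContinuousOn (fun x : ℝ => 9 * x ^ 3 - 9 * x ^ 2 - 44 * x - 52)
      (Set.Icc (3.14159281 : ℝ) 3.14159283) := by fun_prop
  have hab : (3.14159281 : ℝ) ≤ 3.14159283 := by norm_num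
  have h0 : (0 : ℝ) ∈ Set.Icc (9 * (3.14159281 : ℝ) ^ 3 - 9 * 3.14159281 ^ 2 - 44 * 3.14159281 - 52)
      (9 * (3.14159283 : ℝ) ^ 3 - 9 * 3.14159283 ^ 2 - 44 * 3.14159283 - 52) := by
    constructor <;> norm_num
  obtain ⟨r, hr, hr0⟩ := intermediate_value_Icc hab hc h0
  refine ⟨r, hr0, ?_⟩
  have hpi1 := Real.pi_gt_d20
  have hpi2 := Real.pi_lt_d20
  rw [abs_sub_lt_iff]
  obtain ⟨h1, h2⟩ := hr
  norm_num at h1 h2 hpi1 hpi2 ⊢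
  constructor <;> linarith
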